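/- arXiv:0812.3528 — 3 statements merged into one kernel-verified Lean document; each statement's English description precedes it below -/
import Mathlib

section
/- Suppose there exists a positive random sequence (α_n) increasing to infinity and a symmetric positive definite d×d matrix L such that S_n/α_n → L a.s. Set φ_n = α_n^{-1} Φ_n^t L^{-1} Φ_n and let ρ_n be the spectral radius of the symmetric matrix R_n = α_n L^{1/2} S_n^{-1} L^{1/2} − I. Then |f_n − φ_n| ≤ ρ_n φ_n pointwise, ρ_n → 0 almost surely, and consequently f_n = φ_n + o(φ_n) almost surely. -/
/-!
Put `y = L^{-1/2} Φ_n`. Then `φ_n = α_n⁻¹ |y|²` and `f_n - φ_n = α_n⁻¹ yᵗ R_n y`, and the quadratic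
form of the symmetric matrix `R_n` lies between `-ρ_n |y|²` and `ρ_n |y|²` because
`-ρ_n I ≤ R_n ≤ ρ_n I` in the Loewner order. Since `R_n = L^{1/2} (α_n⁻¹ S_n)⁻¹ L^{1/2} - I` and
inversion is continuous at `L`, `R_n → 0`, and the spectral radius is dominated by the operator norm.
-/

open MeasureTheory Filter Finset Matrix Topology Asymptotics

noncomputable section

/-- `S_n = S + ∑_{k=0}^n Φ_k Φ_kᵗ`. -/
def Smat {Ω : Type*} {d : ℕ} (S : Matrix (Fin d) (Fin d) ℝ)
    (Φ : ℕ → Ω → Fin d → ℝ) (n : ℕ) (ω : Ω) : Matrix (Fin d) (Fin d) ℝ :=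
  S + ∑ k ∈ Finset.range (n + 1), vecMulVec (Φ k ω) (Φ k ω)

/-- The explosion coefficient `f_n = Φ_nᵗ S_n⁻¹ Φ_n`. -/
def expl {Ω : Type*} {d : ℕ} (S : Matrix (Fin d) (Fin d) ℝ)
    (Φ : ℕ → Ω → Fin d → ℝ) (n : ℕ) (ω : Ω) : ℝ :=
  Φ n ω ⬝ᵥ ((Smat S Φ n ω)⁻¹ *ᵥ Φ n ω)

section RealSpectralRadius

variable {A : Type*}

-- The `ρ_n` of the theorem; Mathlib's `spectralRadius` is `ℝ≥0∞`-valued.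
def realSpectralRadius [Ring A] [Algebra ℝ A] (a : A) : ℝ :=
  ⨆ x ∈ spectrum ℝ a, |x|

theorem realSpectralRadius_nonneg [Ring A] [Algebra ℝ A] (a : A) : 0 ≤ realSpectralRadius a :=
  Real.iSup_nonneg fun x => Real.iSup_nonneg fun _ => abs_nonneg x

variable [NormedRing A] [NormedAlgebra ℝ A] [CompleteSpace A]

theorem realSpectralRadius_le_norm_mul_norm_one (a : A) :
    realSpectralRadius a ≤ ‖a‖ * ‖(1 : A)‖ := by
  have h0 : 0 ≤ ‖a‖ * ‖(1 : A)‖ := by positivity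
  exact Real.iSup_le (fun x => Real.iSup_le (spectrum.norm_le_norm_mul_of_mem (𝕜 := ℝ)) h0) h0

theorem abs_le_realSpectralRadius {a : A} {x : ℝ} (hx : x ∈ spectrum ℝ a) :
    |x| ≤ realSpectralRadius a := by
  have hbdd : BddAbove (Set.range fun y : ℝ => ⨆ _ : y ∈ spectrum ℝ a, |y|) := by
    refine ⟨‖a‖ * ‖(1 : A)‖, ?_⟩
    rintro _ ⟨y, rfl⟩
    exact Real.iSup_le (spectrum.norm_le_norm_mul_of_mem (𝕜 := ℝ)) (by positivity)
  exact (le_ciSup_of_le (Set.finite_range _).bddAbove hx le_rfl).trans (le_ciSup hbdd x)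

theorem tendsto_realSpectralRadius_zero {ι : Type*} {l : Filter ι} {f : ι → A}
    (hf : Tendsto f l (𝓝 0)) : Tendsto (fun i => realSpectralRadius (f i)) l (𝓝 0) := by
  have hnorm : Tendsto (fun i => ‖f i‖ * ‖(1 : A)‖) l (𝓝 0) := by
    simpa using (tendsto_norm_zero.comp hf).mul_const ‖(1 : A)‖
  exact squeeze_zero (fun i => realSpectralRadius_nonneg _)
    (fun i => realSpectralRadius_le_norm_mul_norm_one _) hnorm

end RealSpectralRadius

namespace Matrix

variable {n : Type*} [Fintype n] [DecidableEq n]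

theorem dotProduct_mulVec_conj {R : Type*} [CommRing R] {H : Matrix n n R} (hH : Hᵀ = H)
    (hHu : IsUnit H) (B : Matrix n n R) (v : n → R) :
    (H⁻¹ *ᵥ v) ⬝ᵥ (H * B * H) *ᵥ (H⁻¹ *ᵥ v) = v ⬝ᵥ B *ᵥ v := by
  have hv : H *ᵥ (H⁻¹ *ᵥ v) = v := by
    rw [mulVec_mulVec, mul_nonsing_inv _ ((isUnit_iff_isUnit_det H).1 hHu), one_mulVec]
  rw [← mulVec_mulVec, ← mulVec_mulVec, hv, dotProduct_mulVec, ← mulVec_transpose, hH, hv]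

open scoped Matrix.Norms.L2Operator MatrixOrder

theorem IsHermitian.abs_dotProduct_mulVec_le {A : Matrix n n ℝ} (hA : A.IsHermitian)
    (y : n → ℝ) : |y ⬝ᵥ A *ᵥ y| ≤ realSpectralRadius A * (y ⬝ᵥ y) := by
  set r := realSpectralRadius A
  have hupper : (algebraMap ℝ (Matrix n n ℝ) r - A).PosSemidef :=
    le_algebraMap_of_spectrum_le
      (fun x hx => (le_abs_self x).trans (abs_le_realSpectralRadius hx)) hA.isSelfAdjoint
  have hlower : (A - algebraMap ℝ (Matrix n n ℝ) (-r)).PosSemidef :=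
    algebraMap_le_of_le_spectrum
      (fun x hx => neg_le.1 ((neg_le_abs x).trans (abs_le_realSpectralRadius hx)))
      hA.isSelfAdjoint
  have h1 := hupper.dotProduct_mulVec_nonneg y
  have h2 := hlower.dotProduct_mulVec_nonneg y
  simp only [Algebra.algebraMap_eq_smul_one, sub_mulVec, smul_mulVec, one_mulVec, dotProduct_sub,
    dotProduct_smul, smul_eq_mul, star_trivial] at h1 h2
  exact abs_le.2 ⟨by linarith, by linarith⟩

theorem tendsto_realSpectralRadius_conj_inv_sub_one {ι : Type*} {l : Filter ι}
    {H : Matrix n n ℝ} (hH : IsUnit H) {M : ι → Matrix n n ℝ} (hM : Tendsto M l (𝓝 (H * H))) :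
    Tendsto (fun i => realSpectralRadius (H * (M i)⁻¹ * H - 1)) l (𝓝 0) := by
  have hdet : IsUnit H.det := (isUnit_iff_isUnit_det H).1 hH
  have hinv : ContinuousAt (fun X : Matrix n n ℝ => X⁻¹) (H * H) := by
    simp_rw [nonsing_inv_eq_ringInverse]
    exact NormedRing.inverse_continuousAt (hH.mul hH).unit
  have hlimit : H * (H * H)⁻¹ * H - 1 = 0 := by
    rw [Matrix.mul_inv_rev, ← mul_assoc, mul_nonsing_inv _ hdet, one_mul,
      nonsing_inv_mul _ hdet, sub_self]
  have hcont : ContinuousAt (fun X => H * X⁻¹ * H - 1) (H * H) :=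
    ((continuousAt_const.mul hinv).mul continuousAt_const).sub continuousAt_const
  have hconj := hcont.tendsto.comp hM
  rw [hlimit] at hconj
  exact tendsto_realSpectralRadius_zero hconj

theorem abs_dotProduct_mulVec_sub_le {B H : Matrix n n ℝ} (hB : B.IsHermitian)
    (hH : H.IsHermitian) (hHu : IsUnit H) {a : ℝ} (ha : 0 < a) (v : n → ℝ) :
    |v ⬝ᵥ B *ᵥ v - a⁻¹ * (v ⬝ᵥ (H * H)⁻¹ *ᵥ v)| ≤
      realSpectralRadius (a • (H * B * H) - 1) * (a⁻¹ * (v ⬝ᵥ (H * H)⁻¹ *ᵥ v)) := by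
  have hHt : Hᵀ = H := by simpa [conjTranspose_eq_transpose_of_trivial] using hH.eq
  have hdet : IsUnit H.det := (isUnit_iff_isUnit_det H).1 hHu
  set y := H⁻¹ *ᵥ v
  have hnorm : v ⬝ᵥ (H * H)⁻¹ *ᵥ v = y ⬝ᵥ y := by
    rw [← dotProduct_mulVec_conj hHt hHu, Matrix.mul_inv_rev, ← mul_assoc,
      mul_nonsing_inv _ hdet, one_mul, nonsing_inv_mul _ hdet, one_mulVec]
  have hR : (a • (H * B * H) - 1).IsHermitian := by
    simpa only [hH.eq] using
      ((isHermitian_conjTranspose_mul_mul H hB).smul (IsSelfAdjoint.all a)).sub isHermitian_one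
  have hdiff : v ⬝ᵥ B *ᵥ v - a⁻¹ * (y ⬝ᵥ y) = a⁻¹ * (y ⬝ᵥ (a • (H * B * H) - 1) *ᵥ y) := by
    rw [← dotProduct_mulVec_conj hHt hHu B v, sub_mulVec, smul_mulVec, one_mulVec,
      dotProduct_sub, dotProduct_smul, smul_eq_mul, mul_sub, inv_mul_cancel_left₀ ha.ne']
  rw [hnorm, hdiff, abs_mul, abs_of_pos (inv_pos.2 ha), mul_left_comm]
  exact mul_le_mul_of_nonneg_left (hR.abs_dotProduct_mulVec_le y) (inv_nonneg.2 ha.le)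

end Matrix

theorem Asymptotics.isLittleO_of_abs_le_mul {ι : Type*} {l : Filter ι} {u v r : ι → ℝ}
    (hr : Tendsto r l (𝓝 0)) (h : ∀ i, |u i| ≤ r i * v i) : u =o[l] v := by
  have hrv : (fun i => r i * v i) =o[l] v := by
    simpa using ((isLittleO_one_iff ℝ).2 hr).mul_isBigO (isBigO_refl v l)
  exact (isBigO_of_le l fun i => (h i).trans (le_abs_self _)).trans_isLittleO hrv

theorem posDef_Smat {Ω : Type*} {d : ℕ} {S : Matrix (Fin d) (Fin d) ℝ} (hS : S.PosDef)
    (Φ : ℕ → Ω → Fin d → ℝ) (n : ℕ) (ω : Ω) : (Smat S Φ n ω).PosDef :=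
  hS.add_posSemidef <| posSemidef_sum _ fun k _ => by
    simpa using posSemidef_vecMulVec_self_star (Φ k ω)

theorem explosion_coefficient_asymptotics_general
    {Ω : Type*} {m0 : MeasurableSpace Ω} {μ : Measure Ω}
    {d : ℕ} (Φ : ℕ → Ω → Fin d → ℝ) (S L Lhalf : Matrix (Fin d) (Fin d) ℝ)
    (hS : S.PosDef)
    (hLhalf : Lhalf.PosDef) (hLhalfsq : Lhalf * Lhalf = L)
    (α : ℕ → Ω → ℝ)
    (hαpos : ∀ n ω, 0 < α n ω)
    (hconv : ∀ᵐ ω ∂μ, Tendsto (fun n => (α n ω)⁻¹ • Smat S Φ n ω) atTop (𝓝 L)) :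
    let φ : ℕ → Ω → ℝ := fun n ω => (α n ω)⁻¹ * (Φ n ω ⬝ᵥ (L⁻¹ *ᵥ Φ n ω))
    let R : ℕ → Ω → Matrix (Fin d) (Fin d) ℝ :=
      fun n ω => α n ω • (Lhalf * (Smat S Φ n ω)⁻¹ * Lhalf) - 1
    let ρ : ℕ → Ω → ℝ := fun n ω => ⨆ x ∈ spectrum ℝ (R n ω), |x|
    (∀ ω n, |expl S Φ n ω - φ n ω| ≤ ρ n ω * φ n ω) ∧
      (∀ᵐ ω ∂μ, Tendsto (fun n => ρ n ω) atTop (𝓝 0)) ∧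
      (∀ᵐ ω ∂μ, (fun n => expl S Φ n ω - φ n ω) =o[atTop] fun n => φ n ω) := by
  intro φ R ρ
  subst hLhalfsq
  have hH : IsUnit Lhalf := hLhalf.isUnit
  have bound : ∀ ω n, |expl S Φ n ω - φ n ω| ≤ ρ n ω * φ n ω := fun ω n =>
    abs_dotProduct_mulVec_sub_le (posDef_Smat hS Φ n ω).isHermitian.inv hLhalf.isHermitian hH
      (hαpos n ω) (Φ n ω)
  have hR : ∀ n ω, R n ω = Lhalf * ((α n ω)⁻¹ • Smat S Φ n ω)⁻¹ * Lhalf - 1 := fun n ω => by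
    have := invertibleOfNonzero (inv_ne_zero (hαpos n ω).ne')
    rw [inv_smul _ _ ((isUnit_iff_isUnit_det _).1 (posDef_Smat hS Φ n ω).isUnit), invOf_eq_inv,
      inv_inv, mul_smul_comm, smul_mul_assoc]
  have hρ : ∀ᵐ ω ∂μ, Tendsto (fun n => ρ n ω) atTop (𝓝 0) := by
    filter_upwards [hconv] with ω hω
    show Tendsto (fun n => realSpectralRadius (R n ω)) atTop (𝓝 0)
    simpa only [hR] using tendsto_realSpectralRadius_conj_inv_sub_one hH hω
  exact ⟨bound, hρ, hρ.mono fun ω hω => isLittleO_of_abs_le_mul hω (bound ω)⟩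

/-- If `S_n/α_n → L` a.s., then with `φ_n = α_n⁻¹ Φ_nᵗ L⁻¹ Φ_n` and `ρ_n` the spectral
radius of the symmetric matrix `R_n = α_n L^{1/2} S_n⁻¹ L^{1/2} - I`, one has
`|f_n - φ_n| ≤ ρ_n φ_n` pointwise, `ρ_n → 0` a.s., and hence `f_n = φ_n + o(φ_n)` a.s. -/
theorem explosion_coefficient_asymptotics
    {Ω : Type*} {m0 : MeasurableSpace Ω} {μ : Measure Ω} [IsProbabilityMeasure μ]
    {d : ℕ} (Φ : ℕ → Ω → Fin d → ℝ) (S L Lhalf : Matrix (Fin d) (Fin d) ℝ)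
    (hS : S.PosDef) (hL : L.PosDef)
    (hLhalf : Lhalf.PosDef) (hLhalfsq : Lhalf * Lhalf = L)
    (α : ℕ → Ω → ℝ)
    (hΦmeas : ∀ n, Measurable (Φ n))
    (hαmeas : ∀ n, Measurable (α n))
    (hαpos : ∀ n ω, 0 < α n ω)
    (hαmono : ∀ᵐ ω ∂μ, Monotone fun n => α n ω)
    (hαtop : ∀ᵐ ω ∂μ, Tendsto (fun n => α n ω) atTop atTop)
    (hconv : ∀ᵐ ω ∂μ, Tendsto (fun n => (α n ω)⁻¹ • Smat S Φ n ω) atTop (𝓝 L)) :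
    let φ : ℕ → Ω → ℝ := fun n ω => (α n ω)⁻¹ * (Φ n ω ⬝ᵥ (L⁻¹ *ᵥ Φ n ω))
    let R : ℕ → Ω → Matrix (Fin d) (Fin d) ℝ :=
      fun n ω => α n ω • (Lhalf * (Smat S Φ n ω)⁻¹ * Lhalf) - 1
    let ρ : ℕ → Ω → ℝ := fun n ω => ⨆ x ∈ spectrum ℝ (R n ω), |x|
    (∀ ω n, |expl S Φ n ω - φ n ω| ≤ ρ n ω * φ n ω) ∧
      (∀ᵐ ω ∂μ, Tendsto (fun n => ρ n ω) atTop (𝓝 0)) ∧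
      (∀ᵐ ω ∂μ, (fun n => expl S Φ n ω - φ n ω) =o[atTop] fun n => φ n ω) :=
  explosion_coefficient_asymptotics_general (m0 := m0) Φ S L Lhalf hS hLhalf hLhalfsq α hαpos hconv
end
end

section
/- Let A be a symmetric positive definite d×d real matrix, φ, M ∈ R^d, and set B = A + φφ^t and f = φ^t B^{-1} φ. Then (M^t B^{-1} φ)² = (1 − f)(M^t A^{-1} M − M^t B^{-1} M). In particular, with g_n = M_n^t S_n^{-1} Φ_n as induced by Riccati's formula, one has g_n² = (1 − f_n) a_n(1), where a_n(1) = M_n^t S_{n-1}^{-1} M_n − M_n^t S_n^{-1} M_n and f_n = Φ_n^t S_n^{-1} Φ_n. -/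
open Finset Matrix

noncomputable section

/-- `S_n = S + ∑_{k=0}^n Φ_k Φ_kᵗ` (deterministic version). -/
def SmatD {d : ℕ} (S : Matrix (Fin d) (Fin d) ℝ)
    (Φ : ℕ → Fin d → ℝ) (n : ℕ) : Matrix (Fin d) (Fin d) ℝ :=
  S + ∑ k ∈ Finset.range (n + 1), vecMulVec (Φ k) (Φ k)

lemma vecMulVec_mulVec' {d : ℕ} (w v x : Fin d → ℝ) :
    vecMulVec w v *ᵥ x = (v ⬝ᵥ x) • w := by
  ext i
  simp only [vecMulVec_apply, mulVec, dotProduct, Pi.smul_apply, smul_eq_mul,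
    Finset.mul_sum, of_apply]
  rw [Finset.sum_mul]
  exact Finset.sum_congr rfl fun j _ => by ring

lemma vecMulVec_posSemidef {d : ℕ} (φ : Fin d → ℝ) : (vecMulVec φ φ).PosSemidef := by
  rw [posSemidef_iff_dotProduct_mulVec]
  constructor
  · ext i j; simp [IsHermitian, conjTranspose, vecMulVec_apply, mul_comm]
  · intro x
    rw [vecMulVec_mulVec', dotProduct_smul, star_trivial, smul_eq_mul,
      dotProduct_comm]
    exact mul_self_nonneg _

lemma main_lemma {d : ℕ} (A : Matrix (Fin d) (Fin d) ℝ) (hA : A.PosDef) (φ M : Fin d → ℝ) :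
    ((M ⬝ᵥ ((A + vecMulVec φ φ)⁻¹ *ᵥ φ)) ^ 2 =
      (1 - φ ⬝ᵥ ((A + vecMulVec φ φ)⁻¹ *ᵥ φ)) *
        (M ⬝ᵥ (A⁻¹ *ᵥ M) - M ⬝ᵥ ((A + vecMulVec φ φ)⁻¹ *ᵥ M))) := by
  set B := A + vecMulVec φ φ with hBdef
  have hB : B.PosDef := hA.add_posSemidef (vecMulVec_posSemidef φ)
  have hAu : IsUnit A.det := isUnit_iff_ne_zero.mpr (ne_of_gt hA.det_pos)
  have hBu : IsUnit B.det := isUnit_iff_ne_zero.mpr (ne_of_gt hB.det_pos)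
  set v := B⁻¹ *ᵥ φ with hv
  set w := B⁻¹ *ᵥ M with hw
  have hBv : B *ᵥ v = φ := by rw [hv, mulVec_mulVec, mul_nonsing_inv _ hBu, one_mulVec]
  have hBw : B *ᵥ w = M := by rw [hw, mulVec_mulVec, mul_nonsing_inv _ hBu, one_mulVec]
  set f := φ ⬝ᵥ v with hf
  have hAv : A *ᵥ v = (1 - f) • φ := by
    have : B *ᵥ v = A *ᵥ v + (φ ⬝ᵥ v) • φ := by
      rw [hBdef, add_mulVec, vecMulVec_mulVec']
    rw [hBv] at this
    rw [hf, sub_smul, one_smul]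
    linear_combination (norm := module) -this
  have hAinv : ∀ x : Fin d → ℝ, A⁻¹ *ᵥ (A *ᵥ x) = x := fun x => by
    rw [mulVec_mulVec, nonsing_inv_mul _ hAu, one_mulVec]
  have hAiφ : (1 - f) • (A⁻¹ *ᵥ φ) = v := by
    rw [← mulVec_smul, ← hAv, hAinv]
  have hf1 : 1 - f ≠ 0 := by
    intro h
    have hv0 : v = 0 := by rw [← hAiφ, h, zero_smul]
    have : φ = 0 := by rw [← hBv, hv0, mulVec_zero]
    rw [hf, hv0, dotProduct_zero] at h
    norm_num at h
  -- A⁻¹ M = w + (φ ⬝ w) • A⁻¹ φ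
  have hAM : A⁻¹ *ᵥ M = w + (φ ⬝ᵥ w) • (A⁻¹ *ᵥ φ) := by
    have hBM : A *ᵥ w + (φ ⬝ᵥ w) • φ = M := by
      rw [← hBw, hBdef, add_mulVec, vecMulVec_mulVec']
    calc A⁻¹ *ᵥ M = A⁻¹ *ᵥ (A *ᵥ w + (φ ⬝ᵥ w) • φ) := by rw [hBM]
    _ = w + (φ ⬝ᵥ w) • (A⁻¹ *ᵥ φ) := by
        rw [mulVec_add, hAinv, mulVec_smul]
  -- symmetry: φ ⬝ w = M ⬝ v
  have hsym : φ ⬝ᵥ w = M ⬝ᵥ v := by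
    have hH : B⁻¹ᵀ = B⁻¹ := by
      have := (hB.posSemidef.isHermitian.inv : B⁻¹.IsHermitian)
      simpa [IsHermitian] using this
    have hvm : φ ᵥ* B⁻¹ = B⁻¹ *ᵥ φ := by
      nth_rewrite 1 [← hH]; exact vecMul_transpose _ _
    rw [hw, hv, dotProduct_mulVec, hvm, dotProduct_comm]
  have key : (1 - f) * (M ⬝ᵥ (A⁻¹ *ᵥ φ)) = M ⬝ᵥ v := by
    rw [← hAiφ, dotProduct_smul, smul_eq_mul]
  rw [hAM, dotProduct_add, dotProduct_smul, hsym, smul_eq_mul]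
  linear_combination -((M ⬝ᵥ v) * key)

lemma sum_vecMulVec_posSemidef {d : ℕ} (Φ : ℕ → Fin d → ℝ) (F : Finset ℕ) :
    (∑ k ∈ F, vecMulVec (Φ k) (Φ k)).PosSemidef := by
  classical
  induction F using Finset.induction with
  | empty => simpa using Matrix.PosSemidef.zero
  | insert _ _ hnotmem ih =>
    rw [Finset.sum_insert hnotmem]
    exact (vecMulVec_posSemidef _).add ih

/-- For `A` symmetric positive definite, `B = A + φφᵗ` and `f = φᵗ B⁻¹ φ`, one has
`(Mᵗ B⁻¹ φ)² = (1 - f)(Mᵗ A⁻¹ M - Mᵗ B⁻¹ M)`; in particular `g_n² = (1 - f_n) a_n(1)`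
where `g_n = M_nᵗ S_n⁻¹ Φ_n` and `a_n(1) = M_nᵗ S_{n-1}⁻¹ M_n - M_nᵗ S_n⁻¹ M_n`. -/
theorem riccati_g_formula
    {d : ℕ} (A : Matrix (Fin d) (Fin d) ℝ) (hA : A.PosDef) (φ M : Fin d → ℝ) :
    ((M ⬝ᵥ ((A + vecMulVec φ φ)⁻¹ *ᵥ φ)) ^ 2 =
      (1 - φ ⬝ᵥ ((A + vecMulVec φ φ)⁻¹ *ᵥ φ)) *
        (M ⬝ᵥ (A⁻¹ *ᵥ M) - M ⬝ᵥ ((A + vecMulVec φ φ)⁻¹ *ᵥ M))) ∧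
      ∀ (Φ : ℕ → Fin d → ℝ) (Mseq : ℕ → Fin d → ℝ) (S : Matrix (Fin d) (Fin d) ℝ),
        S.PosDef → ∀ n : ℕ, 1 ≤ n →
        (Mseq n ⬝ᵥ ((SmatD S Φ n)⁻¹ *ᵥ Φ n)) ^ 2 =
          (1 - Φ n ⬝ᵥ ((SmatD S Φ n)⁻¹ *ᵥ Φ n)) *
            (Mseq n ⬝ᵥ ((SmatD S Φ (n - 1))⁻¹ *ᵥ Mseq n) -
              Mseq n ⬝ᵥ ((SmatD S Φ n)⁻¹ *ᵥ Mseq n)) := by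
  refine ⟨main_lemma A hA φ M, ?_⟩
  intro Φ Mseq S hS n hn
  have hprev : (SmatD S Φ (n - 1)).PosDef :=
    hS.add_posSemidef (sum_vecMulVec_posSemidef Φ _)
  have hstep : SmatD S Φ n = SmatD S Φ (n - 1) + vecMulVec (Φ n) (Φ n) := by
    unfold SmatD
    have h1 : n - 1 + 1 = n := by omega
    rw [add_assoc, h1, ← Finset.sum_range_succ (fun k => vecMulVec (Φ k) (Φ k)) n]
  rw [hstep]
  exact main_lemma _ hprev (Φ n) (Mseq n)
end
end

section
/- Let A be a symmetric positive definite d×d real matrix, φ, M ∈ R^d, and set B = A + φφ^t and f = φ^t B^{-1} φ. Then M^t A^{-1} M − M^t B^{-1} M ≤ f · (M^t A^{-1} M). In particular, a_n(1) ≤ f_n V_n, where a_n(1) = M_n^t S_{n-1}^{-1} M_n − M_n^t S_n^{-1} M_n, V_n = M_n^t S_{n-1}^{-1} M_n, and f_n = Φ_n^t S_n^{-1} Φ_n. -/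
/-!
By the Sherman–Morrison formula, with `c = φᵗ A⁻¹ φ`, `t = Mᵗ A⁻¹ φ` and `V = Mᵗ A⁻¹ M`,
the decrement `Mᵗ A⁻¹ M - Mᵗ B⁻¹ M` equals `t² / (1 + c)` while `f = c / (1 + c)`.
The claim is therefore `t² ≤ c V`, the Cauchy–Schwarz inequality for the inner product
given by `A⁻¹`. The sequential statement is the case `A = S_{n-1}`, `φ = Φ_n`.
-/

open Finset Matrix

noncomputable section

namespace Matrix

variable {n : Type*} [Fintype n]

section ShermanMorrison

variable {K : Type*} [Field K] [DecidableEq n]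

theorem inv_add_vecMulVec {A : Matrix n n K} (hA : IsUnit A.det) (a b : n → K)
    (h : 1 + b ⬝ᵥ A⁻¹ *ᵥ a ≠ 0) :
    (A + vecMulVec a b)⁻¹ =
      A⁻¹ - (1 + b ⬝ᵥ A⁻¹ *ᵥ a)⁻¹ • vecMulVec (A⁻¹ *ᵥ a) (b ᵥ* A⁻¹) := by
  apply inv_eq_right_inv
  set s := (1 + b ⬝ᵥ A⁻¹ *ᵥ a)⁻¹
  have hs : s * (1 + b ⬝ᵥ A⁻¹ *ᵥ a) = 1 := inv_mul_cancel₀ h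
  rw [Matrix.add_mul, Matrix.mul_sub, Matrix.mul_sub, Matrix.mul_smul, Matrix.mul_smul,
    mul_nonsing_inv A hA, mul_vecMulVec, mulVec_mulVec, mul_nonsing_inv A hA, one_mulVec,
    vecMulVec_mul, vecMulVec_mul_vecMulVec, vecMulVec_smul, smul_smul]
  calc 1 - s • vecMulVec a (b ᵥ* A⁻¹)
        + (vecMulVec a (b ᵥ* A⁻¹) - (s * (b ⬝ᵥ A⁻¹ *ᵥ a)) • vecMulVec a (b ᵥ* A⁻¹))
      = 1 + (1 - s * (1 + b ⬝ᵥ A⁻¹ *ᵥ a)) • vecMulVec a (b ᵥ* A⁻¹) := by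
        rw [mul_add, mul_one, sub_add_eq_sub_sub, sub_smul, sub_smul, one_smul]; abel
    _ = 1 := by rw [hs, sub_self, zero_smul, add_zero]

theorem dotProduct_inv_add_vecMulVec_mulVec {A : Matrix n n K} (hA : IsUnit A.det)
    (a b x y : n → K) (h : 1 + b ⬝ᵥ A⁻¹ *ᵥ a ≠ 0) :
    x ⬝ᵥ (A + vecMulVec a b)⁻¹ *ᵥ y =
      x ⬝ᵥ A⁻¹ *ᵥ y - (x ⬝ᵥ A⁻¹ *ᵥ a) * (b ⬝ᵥ A⁻¹ *ᵥ y) / (1 + b ⬝ᵥ A⁻¹ *ᵥ a) := by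
  rw [inv_add_vecMulVec hA a b h, sub_mulVec, smul_mulVec, vecMulVec_mulVec,
    dotProduct_sub, dotProduct_smul, dotProduct_smul, ← dotProduct_mulVec]
  simp only [MulOpposite.smul_eq_mul_unop, MulOpposite.unop_op, smul_eq_mul]
  ring

end ShermanMorrison

theorem IsHermitian.dotProduct_mulVec_comm {P : Matrix n n ℝ} (hP : P.IsHermitian)
    (x y : n → ℝ) : x ⬝ᵥ P *ᵥ y = y ⬝ᵥ P *ᵥ x := by
  rw [dotProduct_mulVec, ← mulVec_transpose, (isHermitian_iff_isSymm.mp hP).eq,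
    dotProduct_comm]

theorem PosSemidef.dotProduct_mulVec_sq_le {P : Matrix n n ℝ} (hP : P.PosSemidef)
    (x y : n → ℝ) : (x ⬝ᵥ P *ᵥ y) ^ 2 ≤ (x ⬝ᵥ P *ᵥ x) * (y ⬝ᵥ P *ᵥ y) := by
  have hquad : ∀ r : ℝ,
      0 ≤ (x ⬝ᵥ P *ᵥ x) * (r * r) + 2 * (x ⬝ᵥ P *ᵥ y) * r + y ⬝ᵥ P *ᵥ y := by
    intro r
    have h := hP.dotProduct_mulVec_nonneg (r • x + y)
    simp only [star_trivial, mulVec_add, mulVec_smul, add_dotProduct, dotProduct_add,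
      smul_dotProduct, dotProduct_smul, smul_eq_mul, hP.isHermitian.dotProduct_mulVec_comm y x]
      at h
    linarith
  have := discrim_le_zero hquad
  rw [discrim] at this
  linarith

theorem PosDef.dotProduct_inv_sub_inv_add_vecMulVec_le {A : Matrix n n ℝ} [DecidableEq n]
    (hA : A.PosDef) (φ M : n → ℝ) :
    M ⬝ᵥ A⁻¹ *ᵥ M - M ⬝ᵥ (A + vecMulVec φ φ)⁻¹ *ᵥ M ≤
      (φ ⬝ᵥ (A + vecMulVec φ φ)⁻¹ *ᵥ φ) * (M ⬝ᵥ A⁻¹ *ᵥ M) := by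
  have hAinv : A⁻¹.PosSemidef := hA.inv.posSemidef
  set c := φ ⬝ᵥ A⁻¹ *ᵥ φ
  set t := M ⬝ᵥ A⁻¹ *ᵥ φ
  set V := M ⬝ᵥ A⁻¹ *ᵥ M
  have hc : 0 < 1 + c := by
    have := hAinv.dotProduct_mulVec_nonneg φ
    rw [star_trivial] at this
    linarith
  have hCS : t ^ 2 ≤ V * c := hAinv.dotProduct_mulVec_sq_le M φ
  have hdet : IsUnit A.det := hA.det_pos.ne'.isUnit
  rw [dotProduct_inv_add_vecMulVec_mulVec hdet φ φ M M hc.ne',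
    dotProduct_inv_add_vecMulVec_mulVec hdet φ φ φ φ hc.ne',
    hAinv.isHermitian.dotProduct_mulVec_comm φ M]
  calc V - (V - t * t / (1 + c)) = t ^ 2 / (1 + c) := by ring
    _ ≤ V * c / (1 + c) := by gcongr
    _ = (c - c * c / (1 + c)) * V := by field_simp; ring

end Matrix

theorem SmatD_posDef {d : ℕ} {S : Matrix (Fin d) (Fin d) ℝ} (hS : S.PosDef)
    (Φ : ℕ → Fin d → ℝ) (n : ℕ) : (SmatD S Φ n).PosDef :=
  hS.add_posSemidef <| posSemidef_sum _ fun k _ => by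
    simpa using posSemidef_vecMulVec_self_star (Φ k)

theorem SmatD_succ {d : ℕ} (S : Matrix (Fin d) (Fin d) ℝ) (Φ : ℕ → Fin d → ℝ) (n : ℕ) :
    SmatD S Φ (n + 1) = SmatD S Φ n + vecMulVec (Φ (n + 1)) (Φ (n + 1)) := by
  rw [SmatD, SmatD, Finset.sum_range_succ, add_assoc]

/-- For `A` symmetric positive definite, `B = A + φφᵗ` and `f = φᵗ B⁻¹ φ`, one has
`Mᵗ A⁻¹ M - Mᵗ B⁻¹ M ≤ f (Mᵗ A⁻¹ M)`; in particular `a_n(1) ≤ f_n V_n` where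
`a_n(1) = M_nᵗ S_{n-1}⁻¹ M_n - M_nᵗ S_n⁻¹ M_n` and `V_n = M_nᵗ S_{n-1}⁻¹ M_n`. -/
theorem quadratic_decrement_bound
    {d : ℕ} (A : Matrix (Fin d) (Fin d) ℝ) (hA : A.PosDef) (φ M : Fin d → ℝ) :
    (M ⬝ᵥ (A⁻¹ *ᵥ M) - M ⬝ᵥ ((A + vecMulVec φ φ)⁻¹ *ᵥ M) ≤
      (φ ⬝ᵥ ((A + vecMulVec φ φ)⁻¹ *ᵥ φ)) * (M ⬝ᵥ (A⁻¹ *ᵥ M))) ∧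
      ∀ (Φ : ℕ → Fin d → ℝ) (Mseq : ℕ → Fin d → ℝ) (S : Matrix (Fin d) (Fin d) ℝ),
        S.PosDef → ∀ n : ℕ, 1 ≤ n →
        Mseq n ⬝ᵥ ((SmatD S Φ (n - 1))⁻¹ *ᵥ Mseq n) -
            Mseq n ⬝ᵥ ((SmatD S Φ n)⁻¹ *ᵥ Mseq n) ≤
          (Φ n ⬝ᵥ ((SmatD S Φ n)⁻¹ *ᵥ Φ n)) *
            (Mseq n ⬝ᵥ ((SmatD S Φ (n - 1))⁻¹ *ᵥ Mseq n)) := by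
  refine ⟨hA.dotProduct_inv_sub_inv_add_vecMulVec_le φ M, ?_⟩
  intro Φ Mseq S hS n hn
  obtain ⟨m, rfl⟩ := Nat.exists_eq_add_of_le' hn
  rw [Nat.add_sub_cancel, SmatD_succ]
  exact (SmatD_posDef hS Φ m).dotProduct_inv_sub_inv_add_vecMulVec_le _ _
end
end
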